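/- The family of languages generated by graph-controlled insertion-deletion systems with at most 4 components, with insertion rules of size at most (1,1,0) and deletion rules of size at most (1,0,1), equals the family of recursively enumerable languages; that is, GCL_4(ins_1^{1,0}, del_1^{0,1}) = RE. -/

import Mathlib

/-! ### Insertion-deletion rules -/

/-- An insertion rule `(u, α, v)_ins` or a deletion rule `(u, α, v)_del`
over the alphabet `V`. -/
inductive InsDelRule (V : Type) : Type
  | ins (u α v : List V)
  | del (u α v : List V)

namespace InsDelRule

variable {V : Type}

/-- The inserted/deleted string `α` of a rule. -/
def mid : InsDelRule V → List V
  | ins _ α _ => α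
  | del _ α _ => α

/-- `r.Applies w w'` holds if applying the insertion/deletion rule `r`
rewrites the string `w` into the string `w'`:  an insertion rule `(u,α,v)`
rewrites `x ++ u ++ v ++ y` into `x ++ u ++ α ++ v ++ y`, and a deletion rule
`(u,α,v)` rewrites `x ++ u ++ α ++ v ++ y` into `x ++ u ++ v ++ y`. -/
def Applies : InsDelRule V → List V → List V → Prop
  | ins u α v, w, w' => ∃ x y, w = x ++ u ++ v ++ y ∧ w' = x ++ u ++ α ++ v ++ y
  | del u α v, w, w' => ∃ x y, w = x ++ u ++ α ++ v ++ y ∧ w' = x ++ u ++ v ++ y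

/-- The rule has size at most `(n,m,m')` if it is an insertion rule, and
size at most `(p,q,q')` if it is a deletion rule. -/
def SizeLE (r : InsDelRule V) (n m m' p q q' : ℕ) : Prop :=
  match r with
  | ins u α v => α.length ≤ n ∧ u.length ≤ m ∧ v.length ≤ m'
  | del u α v => α.length ≤ p ∧ u.length ≤ q ∧ v.length ≤ q'

end InsDelRule

/-! ### Graph-controlled insertion-deletion systems with k components -/

/-- A graph-controlled insertion-deletion system with `k` components,
over the (finite) alphabet `V`, with terminal alphabet `T` (injectively
embedded into `V`).  The rules in `R` are of the form `(i, r, j)` meaning: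
in component `i`, the insertion/deletion rule `r` may be applied, after which
the string moves to component `j`.  Labels are given implicitly by the
positions in the list `R`. -/
structure GCID (V T : Type) : Type where
  /-- the number of components -/
  k : ℕ
  hV : Finite V
  /-- the embedding of the terminal alphabet into the alphabet -/
  emb : T → V
  embInj : Function.Injective emb
  /-- the finite set of axioms -/
  axioms : List (List V)
  /-- the initial component -/
  i0 : Fin k
  /-- the final component -/
  ifin : Fin k
  /-- the finite set of rules -/
  R : List (Fin k × InsDelRule V × Fin k)
  /-- the inserted/deleted string of every rule is nonempty -/
  mid_ne : ∀ r ∈ R, (r.2.1).mid ≠ []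

namespace GCID

variable {V T : Type}

/-- One transition `(i, w) ⇒ (j, w')`:  some rule `(i, r, j)` of the system
rewrites `w` into `w'`. -/
def Tr (M : GCID V T) : Fin M.k × List V → Fin M.k × List V → Prop :=
  fun c c' => ∃ r ∈ M.R, r.1 = c.1 ∧ r.2.2 = c'.1 ∧ (r.2.1).Applies c.2 c'.2

/-- The language generated by the system: all terminal strings reachable in
the final component from some axiom in the initial component. -/
def lang (M : GCID V T) : Set (List T) :=
  {w | ∃ w' ∈ M.axioms,
    Relation.ReflTransGen M.Tr (M.i0, w') (M.ifin, w.map M.emb)}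

/-- The system has insertion rules of size at most `(n,m,m')` and deletion
rules of size at most `(p,q,q')`. -/
def SizeLE (M : GCID V T) (n m m' p q q' : ℕ) : Prop :=
  ∀ r ∈ M.R, (r.2.1).SizeLE n m m' p q q'

/-- There is an edge from component `i` to component `j` in the communication
graph, i.e. some rule `(i, r, j)` is in `R`. -/
def DirEdge (M : GCID V T) (i j : Fin M.k) : Prop :=
  ∃ r ∈ M.R, r.1 = i ∧ r.2.2 = j

/-- The (undirected, loopless) communication graph of the system. -/
def commGraph (M : GCID V T) : SimpleGraph (Fin M.k) where
  Adj i j := i ≠ j ∧ (M.DirEdge i j ∨ M.DirEdge j i)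
  symm := ⟨fun _ _ h => ⟨h.1.symm, h.2.symm⟩⟩
  loopless := ⟨fun _ h => h.1 rfl⟩

/-- The list of insertion/deletion rules occurring in the system. -/
def ruleList (M : GCID V T) : List (InsDelRule V) := M.R.map (fun r => r.2.1)

end GCID

/-- The family `GCL_k(ins_n^{m,m'}, del_p^{q,q'})` of languages over `T`
generated by graph-controlled insertion-deletion systems with at most `k`
components, insertion rules of size at most `(n,m,m')`, and deletion rules
of size at most `(p,q,q')`. -/
def GCL (T : Type) (k n m m' p q q' : ℕ) : Set (Set (List T)) :=
  {L | ∃ (V : Type) (M : GCID V T),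
    M.k ≤ k ∧ M.SizeLE n m m' p q q' ∧ M.lang = L}

/-- The family `TCL_k(ins_n^{m,m'}, del_p^{q,q'})`:  as `GCL`, but the
communication graph must have a tree structure. -/
def TCL (T : Type) (k n m m' p q q' : ℕ) : Set (Set (List T)) :=
  {L | ∃ (V : Type) (M : GCID V T),
    M.k ≤ k ∧ M.SizeLE n m m' p q q' ∧ M.commGraph.IsTree ∧ M.lang = L}

/-! ### Label-based graph-controlled insertion-deletion systems -/

/-- A (label-based) graph-controlled insertion-deletion system over the
(finite) alphabet `V`, with terminal alphabet `T` (injectively embedded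
into `V`).  The labels are `Fin nLab`; the rule with label `l` is a pair
`(r, E)` of an insertion/deletion rule `r` and a set `E` of possible
successor labels. -/
structure LGCID (V T : Type) : Type where
  hV : Finite V
  /-- the embedding of the terminal alphabet into the alphabet -/
  emb : T → V
  embInj : Function.Injective emb
  /-- the finite set of axioms -/
  axioms : List (List V)
  /-- the number of labels -/
  nLab : ℕ
  /-- the rule `(r, E)` associated to each label -/
  rules : Fin nLab → InsDelRule V × Set (Fin nLab)
  /-- the set of initial labels -/
  I0 : Set (Fin nLab)
  /-- the set of final labels -/
  If : Set (Fin nLab)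
  /-- the inserted/deleted string of every rule is nonempty -/
  mid_ne : ∀ l, (rules l).1.mid ≠ []

namespace LGCID

variable {V T : Type}

/-- One transition `(i, w) ⇒ (j, w')`:  the rule labeled `i` is `(r, E)`,
`r` rewrites `w` into `w'`, and `j ∈ E`. -/
def Tr (M : LGCID V T) : Fin M.nLab × List V → Fin M.nLab × List V → Prop :=
  fun c c' => (M.rules c.1).1.Applies c.2 c'.2 ∧ c'.1 ∈ (M.rules c.1).2

/-- The language generated by the label-based system. -/
def lang (M : LGCID V T) : Set (List T) :=
  {w | ∃ w' ∈ M.axioms, ∃ i0 ∈ M.I0, ∃ i1 ∈ M.If,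
    Relation.ReflTransGen M.Tr (i0, w') (i1, w.map M.emb)}

/-- The list of insertion/deletion rules occurring in the system. -/
def ruleList (M : LGCID V T) : List (InsDelRule V) :=
  List.ofFn (fun l => (M.rules l).1)

end LGCID

/-! ### Type-0 grammars and recursively enumerable languages -/

/-- A type-0 (unrestricted) grammar over the terminal alphabet `T`. -/
structure Grammar (T : Type) : Type 1 where
  /-- the (finite) type of nonterminal symbols -/
  NT : Type
  hNT : Finite NT
  /-- the start symbol -/
  start : NT
  /-- the finite set of productions -/
  rules : List (List (NT ⊕ T) × List (NT ⊕ T))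
  /-- the left-hand side of every production contains a nonterminal -/
  lhs_nt : ∀ r ∈ rules, ∃ X : NT, Sum.inl X ∈ r.1

namespace Grammar

variable {T : Type}

/-- One derivation step of the grammar. -/
def Step (G : Grammar T) (u v : List (G.NT ⊕ T)) : Prop :=
  ∃ r ∈ G.rules, ∃ x y, u = x ++ r.1 ++ y ∧ v = x ++ r.2 ++ y

/-- The derivation relation (reflexive-transitive closure of `Step`). -/
def Derives (G : Grammar T) : List (G.NT ⊕ T) → List (G.NT ⊕ T) → Prop :=
  Relation.ReflTransGen G.Step

/-- The language generated by the grammar. -/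
def language (G : Grammar T) : Set (List T) :=
  {w | G.Derives [Sum.inl G.start] (w.map Sum.inr)}

end Grammar

/-- The family of recursively enumerable languages over `T`: the languages
generated by type-0 (unrestricted) grammars. -/
def RE (T : Type) : Set (Set (List T)) :=
  {L | ∃ G : Grammar T, G.language = L}

/-! ### Special Geffert normal form -/

/-- A type-0 grammar in special Geffert normal form over the terminal
alphabet `T`.  The nonterminals are `N' ∪ {A, B, C, D}`, where the four
special symbols `A, B, C, D` are encoded as `0, 1, 2, 3 : Fin 4`.
Besides the two erasing rules `AB → λ` and `CD → λ` and the rule `S' → λ`,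
the grammar has only context-free rules of the forms `X → bY` and `X → Yb`
with `X, Y ∈ N'` and `b ∈ T ∪ {A,B,C,D}`; such a rule is encoded as
`(X, b, Y, dir)` with `dir = true` for `X → bY` and `dir = false` for
`X → Yb`.  Moreover, except for the rules of the forms `X → Sb` and
`X → S'b`, right-hand sides are unique. -/
structure SGNF (T : Type) : Type 1 where
  /-- the nonterminals other than `A, B, C, D` -/
  N' : Type
  hN' : Finite N'
  /-- the start symbol -/
  S : N'
  /-- the symbol `S'` -/
  S' : N'
  /-- the context-free rules:  `(X, b, Y, true)` encodes `X → bY`,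
  `(X, b, Y, false)` encodes `X → Yb` -/
  cf : List (N' × (Fin 4 ⊕ T) × N' × Bool)
  /-- except for the rules of the forms `X → Sb` and `X → S'b`, any two rules
  with the same right-hand side have the same left-hand side -/
  rhs_unique : ∀ r ∈ cf, ∀ r' ∈ cf, r.2 = r'.2 →
    ¬(r.2.2.2 = false ∧ (r.2.2.1 = S ∨ r.2.2.1 = S')) → r.1 = r'.1

namespace SGNF

variable {T : Type}

/-- The symbols of the grammar: nonterminals `N' ⊕ Fin 4` plus terminals. -/
abbrev Sym (G : SGNF T) : Type := (G.N' ⊕ Fin 4) ⊕ T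

/-- The symbol corresponding to a nonterminal `X ∈ N'`. -/
def ntSym (G : SGNF T) (X : G.N') : G.Sym := Sum.inl (Sum.inl X)

/-- The symbols `A, B, C, D` (for `i = 0, 1, 2, 3`). -/
def abcd (G : SGNF T) (i : Fin 4) : G.Sym := Sum.inl (Sum.inr i)

/-- The symbol corresponding to `b ∈ {A,B,C,D} ∪ T`. -/
def toSym (G : SGNF T) : Fin 4 ⊕ T → G.Sym
  | Sum.inl i => Sum.inl (Sum.inr i)
  | Sum.inr t => Sum.inr t

/-- One derivation step of the grammar: application of a context-free rule
`X → bY` or `X → Yb`, or of one of the erasing rules `AB → λ`, `CD → λ`,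
`S' → λ`. -/
def Step (G : SGNF T) (w w' : List G.Sym) : Prop :=
  (∃ r ∈ G.cf, ∃ x y, w = x ++ [G.ntSym r.1] ++ y ∧
    w' = x ++ (if r.2.2.2 then [G.toSym r.2.1, G.ntSym r.2.2.1]
               else [G.ntSym r.2.2.1, G.toSym r.2.1]) ++ y) ∨
  (∃ x y, w = x ++ [G.abcd 0, G.abcd 1] ++ y ∧ w' = x ++ y) ∨
  (∃ x y, w = x ++ [G.abcd 2, G.abcd 3] ++ y ∧ w' = x ++ y) ∨
  (∃ x y, w = x ++ [G.ntSym G.S'] ++ y ∧ w' = x ++ y)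

/-- The derivation relation (reflexive-transitive closure of `Step`). -/
def Derives (G : SGNF T) : List G.Sym → List G.Sym → Prop :=
  Relation.ReflTransGen G.Step

/-- The language generated by the grammar. -/
def language (G : SGNF T) : Set (List T) :=
  {w | G.Derives [G.ntSym G.S] (w.map Sum.inr)}

end SGNF

/-!
Both inclusions are simulations.

A graph-controlled system is simulated by a grammar whose sentential forms carry a single
control marker naming the current component. The marker walks freely over the coded string and
rewrites the left side of a rule `(i, r, j)` standing to its right into the right side,
turning into the marker of `j`; the marker of the final component may vanish, after which coded
terminals become terminals. Every rule leaves the string of markers and the string of decoded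
letters unchanged or changes them the way a transition of the system does, which gives soundness.

Conversely, a grammar rule `u → v` is applied by a system with four components: a marker is
inserted anywhere, the letters of `u` to its left are deleted one at a time, right to left, and
then the letters of `v` are inserted to its right, right to left. The marker records the rule
and the stage, so each deletion `(λ, a, marker)` and insertion `(marker, b, λ)` is checked
against the rule. To advance a stage, the next marker is inserted to the right of the current
one and the current one is then deleted in the context of the next; the components force these
steps to alternate. Hence only rules of sizes `(1,1,0)` and `(1,0,1)` are needed.
-/

theorem List.map_inl_append_inr_cons_eq {α β : Type*} {L : List α} {m m' : β}
    {Z x y : List (α ⊕ β)} (h : L.map Sum.inl ++ Sum.inr m :: Z = x ++ Sum.inr m' :: y) :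
    (x = L.map Sum.inl ∧ m' = m ∧ y = Z) ∨
      ∃ x', x = L.map Sum.inl ++ Sum.inr m :: x' ∧ Z = x' ++ Sum.inr m' :: y := by
  induction L generalizing x with
  | nil =>
    rcases x with _ | ⟨c, x'⟩
    · simp_all
    · simp only [List.map_nil, List.nil_append, List.cons_append, List.cons.injEq] at h
      exact .inr ⟨x', by simp [h.1], h.2⟩
  | cons a L ih =>
    rcases x with _ | ⟨c, x'⟩
    · simp at h
    · simp only [List.map_cons, List.cons_append, List.cons.injEq] at h
      obtain ⟨rfl, h⟩ := h
      simpa using ih h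

theorem List.map_inl_append_inr_cons_map_inl_eq {α β : Type*} {L R : List α} {m m' : β}
    {x y : List (α ⊕ β)} (h : L.map Sum.inl ++ Sum.inr m :: R.map Sum.inl = x ++ Sum.inr m' :: y) :
    m' = m ∧ x = L.map Sum.inl ∧ y = R.map Sum.inl := by
  rcases List.map_inl_append_inr_cons_eq h with ⟨hx, hm, hy⟩ | ⟨x', -, hR⟩
  · exact ⟨hm, hx, hy⟩
  · have : Sum.inr m' ∈ R.map (Sum.inl : α → α ⊕ β) := by simp [hR]
    simp at this

theorem List.map_inl_append_inr_cons_inr_cons_map_inl_eq {α β : Type*} {L R : List α}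
    {m₁ m₂ m₁' m₂' : β} {x y : List (α ⊕ β)}
    (h : L.map Sum.inl ++ Sum.inr m₁ :: Sum.inr m₂ :: R.map Sum.inl =
      x ++ Sum.inr m₁' :: Sum.inr m₂' :: y) :
    m₁' = m₁ ∧ m₂' = m₂ ∧ x = L.map Sum.inl ∧ y = R.map Sum.inl := by
  rcases List.map_inl_append_inr_cons_eq h with ⟨hx, hm, hy⟩ | ⟨x', -, hR⟩
  · simp only [List.cons.injEq, Sum.inr.injEq] at hy
    exact ⟨hm, hy.1, hx, hy.2⟩
  · have : Sum.inr m₂' ∈ R.map (Sum.inl : α → α ⊕ β) := by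
      rcases x' with _ | ⟨c, x'⟩ <;> simp_all
    simp at this

theorem List.reverse_take_add_one_of_getElem? {α : Type*} {l : List α} {e : ℕ} {a : α}
    (h : l[e]? = some a) : (l.take (e + 1)).reverse = a :: (l.take e).reverse := by
  simp [List.take_add_one, h]

theorem List.reverse_drop_of_getElem? {α : Type*} {l : List α} {e : ℕ} {a : α}
    (h : l[e]? = some a) : (l.drop e).reverse = (l.drop (e + 1)).reverse ++ [a] := by
  rw [List.drop_eq_getElem?_toList_append, h]
  simp

noncomputable def univList (α : Type) [Finite α] : List α := (Finite.exists_univ_list α).choose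

theorem mem_univList {α : Type} [Finite α] (a : α) : a ∈ univList α :=
  (Finite.exists_univ_list α).choose_spec.2 a

namespace InsDelRule

variable {V : Type}

def lhs : InsDelRule V → List V
  | ins u _ v => u ++ v
  | del u α v => u ++ α ++ v

def rhs : InsDelRule V → List V
  | ins u α v => u ++ α ++ v
  | del u _ v => u ++ v

theorem applies_iff (r : InsDelRule V) (w w' : List V) :
    r.Applies w w' ↔ ∃ x y, w = x ++ r.lhs ++ y ∧ w' = x ++ r.rhs ++ y := by
  cases r <;> simp [Applies, lhs, rhs, List.append_assoc]

end InsDelRule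

namespace Grammar

variable {T : Type} (G : Grammar T)

theorem step_of_mem {r : List (G.NT ⊕ T) × List (G.NT ⊕ T)} (hr : r ∈ G.rules)
    (x y : List (G.NT ⊕ T)) : G.Step (x ++ r.1 ++ y) (x ++ r.2 ++ y) :=
  ⟨r, hr, x, y, rfl, rfl⟩

variable {G}

theorem Step.append_context {u v : List (G.NT ⊕ T)} (h : G.Step u v) (p q : List (G.NT ⊕ T)) :
    G.Step (p ++ u ++ q) (p ++ v ++ q) := by
  obtain ⟨r, hr, x, y, rfl, rfl⟩ := h
  simpa only [List.append_assoc] using G.step_of_mem hr (p ++ x) (y ++ q)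

theorem Derives.append_context {u v : List (G.NT ⊕ T)} (h : G.Derives u v)
    (p q : List (G.NT ⊕ T)) : G.Derives (p ++ u ++ q) (p ++ v ++ q) :=
  Relation.ReflTransGen.lift (fun w => p ++ w ++ q)
    (fun _ _ (h : G.Step _ _) => h.append_context p q) _ _ h

end Grammar

/-! ### A grammar simulating a graph-controlled insertion-deletion system -/

namespace GCID

variable {V T : Type} (M : GCID V T)

def Reachable (c : Fin M.k × List V) : Prop :=
  ∃ w ∈ M.axioms, Relation.ReflTransGen M.Tr (M.i0, w) c

variable {M} in
theorem Reachable.tail {c c' : Fin M.k × List V} (h : M.Reachable c) (h' : M.Tr c c') :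
    M.Reachable c' :=
  let ⟨w, hw, hr⟩ := h; ⟨w, hw, hr.tail h'⟩

/-- `some i` is the control marker of component `i` and `none` the start symbol. -/
abbrev SimNT : Type := Option (Fin M.k) ⊕ V

abbrev SimSym : Type := M.SimNT ⊕ T

def ctrl (c : Option (Fin M.k)) : M.SimSym := .inl (.inl c)

def code (a : V) : M.SimSym := .inl (.inr a)

def codes (w : List V) : List M.SimSym := w.map M.code

@[simp] theorem codes_cons (a : V) (w : List V) : M.codes (a :: w) = M.code a :: M.codes w := rfl

@[simp] theorem codes_append (w w' : List V) : M.codes (w ++ w') = M.codes w ++ M.codes w' :=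
  List.map_append

noncomputable def simRules [Finite T] : List (List M.SimSym × List M.SimSym) :=
  have := M.hV
  M.axioms.map (fun w => ([M.ctrl none], M.ctrl (some M.i0) :: M.codes w)) ++
  (univList (Fin M.k × V)).flatMap (fun p =>
    [([M.ctrl (some p.1), M.code p.2], [M.code p.2, M.ctrl (some p.1)]),
     ([M.code p.2, M.ctrl (some p.1)], [M.ctrl (some p.1), M.code p.2])]) ++
  M.R.map (fun ρ => (M.ctrl (some ρ.1) :: M.codes ρ.2.1.lhs,
    M.ctrl (some ρ.2.2) :: M.codes ρ.2.1.rhs)) ++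
  [([M.ctrl (some M.ifin)], [])] ++
  (univList T).map (fun t => ([M.code (M.emb t)], [.inr t]))

theorem mem_simRules_iff [Finite T] {r : List M.SimSym × List M.SimSym} :
    r ∈ M.simRules ↔
      (∃ w ∈ M.axioms, r = ([M.ctrl none], M.ctrl (some M.i0) :: M.codes w)) ∨
      (∃ i a, r = ([M.ctrl (some i), M.code a], [M.code a, M.ctrl (some i)]) ∨
        r = ([M.code a, M.ctrl (some i)], [M.ctrl (some i), M.code a])) ∨
      (∃ ρ ∈ M.R, r = (M.ctrl (some ρ.1) :: M.codes ρ.2.1.lhs,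
        M.ctrl (some ρ.2.2) :: M.codes ρ.2.1.rhs)) ∨
      r = ([M.ctrl (some M.ifin)], []) ∨
      ∃ t, r = ([M.code (M.emb t)], [.inr t]) := by
  have := M.hV
  simp only [simRules, List.mem_append, List.mem_map, List.mem_flatMap, List.mem_cons,
    List.not_mem_nil, or_false]
  constructor
  · rintro ((((⟨w, hw, rfl⟩ | ⟨⟨i, a⟩, -, h⟩) | ⟨ρ, hρ, rfl⟩) | rfl) | ⟨t, -, rfl⟩)
    · exact .inl ⟨w, hw, rfl⟩
    · exact .inr (.inl ⟨i, a, h⟩)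
    · exact .inr (.inr (.inl ⟨ρ, hρ, rfl⟩))
    · exact .inr (.inr (.inr (.inl rfl)))
    · exact .inr (.inr (.inr (.inr ⟨t, rfl⟩)))
  · rintro (⟨w, hw, rfl⟩ | ⟨i, a, h⟩ | ⟨ρ, hρ, rfl⟩ | rfl | ⟨t, rfl⟩)
    · exact .inl (.inl (.inl (.inl ⟨w, hw, rfl⟩)))
    · exact .inl (.inl (.inl (.inr ⟨(i, a), mem_univList _, h⟩)))
    · exact .inl (.inl (.inr ⟨ρ, hρ, rfl⟩))
    · exact .inl (.inr rfl)
    · exact .inr ⟨t, mem_univList t, rfl⟩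

noncomputable abbrev simGrammar [Finite T] : Grammar T where
  NT := M.SimNT
  hNT := have := M.hV; inferInstance
  start := .inl none
  rules := M.simRules
  lhs_nt r hr := by
    rcases M.mem_simRules_iff.mp hr with ⟨w, -, rfl⟩ | ⟨i, a, rfl | rfl⟩ | ⟨ρ, -, rfl⟩ | rfl |
      ⟨t, rfl⟩ <;> simp [ctrl, code]

def controlOf : M.SimSym → List (Option (Fin M.k))
  | .inl (.inl c) => [c]
  | _ => []

def lettersOf : M.SimSym → List V
  | .inl (.inl _) => []
  | .inl (.inr a) => [a]
  | .inr t => [M.emb t]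

@[simp] theorem controlOf_ctrl (c : Option (Fin M.k)) : M.controlOf (M.ctrl c) = [c] := rfl
@[simp] theorem controlOf_code (a : V) : M.controlOf (M.code a) = [] := rfl
@[simp] theorem controlOf_inr (t : T) : M.controlOf (.inr t) = [] := rfl
@[simp] theorem lettersOf_ctrl (c : Option (Fin M.k)) : M.lettersOf (M.ctrl c) = [] := rfl
@[simp] theorem lettersOf_code (a : V) : M.lettersOf (M.code a) = [a] := rfl
@[simp] theorem lettersOf_inr (t : T) : M.lettersOf (.inr t) = [M.emb t] := rfl

@[simp] theorem flatMap_controlOf_codes (w : List V) : (M.codes w).flatMap M.controlOf = [] := by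
  simp [codes, List.flatMap_map]

@[simp] theorem flatMap_lettersOf_codes (w : List V) : (M.codes w).flatMap M.lettersOf = w := by
  simp [codes, List.flatMap_map]

@[simp] theorem flatMap_controlOf_map_inr (w : List T) : (w.map .inr).flatMap M.controlOf = [] := by
  induction w <;> simp_all

@[simp] theorem flatMap_lettersOf_map_inr (w : List T) :
    (w.map .inr).flatMap M.lettersOf = w.map M.emb := by
  induction w <;> simp_all

/-- The simulation invariant; it depends only on the control markers `c` and the decoded
letters `w` of a sentential form. -/
def Consistent (c : List (Option (Fin M.k))) (w : List V) : Prop :=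
  (c = [none] ∧ w = []) ∨ (∃ i, c = [some i] ∧ M.Reachable (i, w)) ∨
    (c = [] ∧ M.Reachable (M.ifin, w))

theorem Consistent.eq_nil_of_start {cx cy : List (Option (Fin M.k))} {w : List V}
    (h : M.Consistent (cx ++ none :: cy) w) : cx = [] ∧ cy = [] ∧ w = [] := by
  rcases h with ⟨hc, hw⟩ | ⟨i, hc, -⟩ | ⟨hc, -⟩ <;> simp_all [List.append_eq_singleton_iff]

theorem Consistent.reachable_of_ctrl {cx cy : List (Option (Fin M.k))} {i : Fin M.k}
    {w : List V} (h : M.Consistent (cx ++ some i :: cy) w) :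
    cx = [] ∧ cy = [] ∧ M.Reachable (i, w) := by
  rcases h with ⟨hc, hw⟩ | ⟨i, hc, h⟩ | ⟨hc, -⟩ <;> simp_all [List.append_eq_singleton_iff]

variable [Finite T]

theorem consistent_of_step {s s' : List M.SimSym}
    (hs : M.Consistent (s.flatMap M.controlOf) (s.flatMap M.lettersOf))
    (h : M.simGrammar.Step s s') :
    M.Consistent (s'.flatMap M.controlOf) (s'.flatMap M.lettersOf) := by
  obtain ⟨r, hr, x, y, rfl, rfl⟩ := h
  rcases M.mem_simRules_iff.mp hr with ⟨w, hw, rfl⟩ | ⟨i, a, rfl | rfl⟩ | ⟨ρ, hρ, rfl⟩ | rfl |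
    ⟨t, rfl⟩
  all_goals simp only [List.flatMap_append, List.flatMap_cons, List.append_nil,
    List.nil_append, controlOf_ctrl, controlOf_code, lettersOf_ctrl, lettersOf_code, controlOf_inr,
    lettersOf_inr, flatMap_controlOf_codes, flatMap_lettersOf_codes, List.append_assoc,
    List.cons_append] at hs ⊢
  all_goals
    generalize x.flatMap M.controlOf = cx at hs ⊢
    generalize y.flatMap M.controlOf = cy at hs ⊢
    generalize x.flatMap M.lettersOf = wx at hs ⊢
    generalize y.flatMap M.lettersOf = wy at hs ⊢
  · obtain ⟨rfl, rfl, hw'⟩ := hs.eq_nil_of_start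
    obtain ⟨rfl, rfl⟩ := List.append_eq_nil_iff.mp hw'
    exact .inr (.inl ⟨M.i0, rfl, w, hw, by simpa using .refl⟩)
  · exact hs
  · exact hs
  · obtain ⟨rfl, rfl, hreach⟩ := hs.reachable_of_ctrl
    refine .inr (.inl ⟨ρ.2.2, rfl, hreach.tail ⟨ρ, hρ, rfl, rfl, ?_⟩⟩)
    exact (ρ.2.1.applies_iff _ _).mpr ⟨wx, wy, by simp, by simp⟩
  · obtain ⟨rfl, rfl, hreach⟩ := hs.reachable_of_ctrl
    exact .inr (.inr ⟨rfl, hreach⟩)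
  · exact hs

theorem consistent_of_derives {s : List M.SimSym} (h : M.simGrammar.Derives [M.ctrl none] s) :
    M.Consistent (s.flatMap M.controlOf) (s.flatMap M.lettersOf) := by
  induction h with
  | refl => exact .inl ⟨rfl, rfl⟩
  | tail _ hstep ih => exact M.consistent_of_step ih hstep

theorem derives_ctrl_codes (i : Fin M.k) (w : List V) :
    M.simGrammar.Derives (M.ctrl (some i) :: M.codes w) (M.codes w ++ [M.ctrl (some i)]) := by
  induction w with
  | nil => exact .refl
  | cons a w ih =>
    have hr := M.mem_simRules_iff.mpr (.inr (.inl ⟨i, a, .inl rfl⟩))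
    have hctx := ih.append_context [M.code a] []
    simp only [List.singleton_append, List.append_nil] at hctx
    exact .head (by simpa using M.simGrammar.step_of_mem hr [] (M.codes w)) hctx

theorem derives_codes_ctrl (i : Fin M.k) (w : List V) :
    M.simGrammar.Derives (M.codes w ++ [M.ctrl (some i)]) (M.ctrl (some i) :: M.codes w) := by
  induction w with
  | nil => exact .refl
  | cons a w ih =>
    have hr := M.mem_simRules_iff.mpr (.inr (.inl ⟨i, a, .inr rfl⟩))
    have hctx := ih.append_context [M.code a] []
    simp only [List.singleton_append, List.append_nil] at hctx
    exact .tail hctx (by simpa using M.simGrammar.step_of_mem hr [] (M.codes w))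

theorem derives_of_tr {i j : Fin M.k} {w w' : List V} (h : M.Tr (i, w) (j, w')) :
    M.simGrammar.Derives (M.ctrl (some i) :: M.codes w) (M.ctrl (some j) :: M.codes w') := by
  obtain ⟨ρ, hρ, rfl, rfl, hap⟩ := h
  obtain ⟨x, y, rfl, rfl⟩ := (ρ.2.1.applies_iff _ _).mp hap
  have hr := M.mem_simRules_iff.mpr (.inr (.inr (.inl ⟨ρ, hρ, rfl⟩)))
  have hsim := M.simGrammar.step_of_mem hr (M.codes x) (M.codes y)
  have hright := (M.derives_ctrl_codes ρ.1 x).append_context [] (M.codes (ρ.2.1.lhs ++ y))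
  have hleft := (M.derives_codes_ctrl ρ.2.2 x).append_context [] (M.codes (ρ.2.1.rhs ++ y))
  simp only [codes_append, List.nil_append, List.append_assoc, List.cons_append]
    at hsim hright hleft ⊢
  exact hright.trans (.head hsim hleft)

theorem derives_codes_emb (w : List T) :
    M.simGrammar.Derives (M.codes (w.map M.emb)) (w.map Sum.inr) := by
  induction w with
  | nil => exact .refl
  | cons t w ih =>
    have hr := M.mem_simRules_iff.mpr (.inr (.inr (.inr (.inr ⟨t, rfl⟩))))
    have hctx := ih.append_context [.inr t] []
    simp only [List.singleton_append, List.append_nil] at hctx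
    exact .head (by simpa using M.simGrammar.step_of_mem hr [] (M.codes (w.map M.emb))) hctx

theorem simGrammar_language : M.simGrammar.language = M.lang := by
  ext w
  constructor
  · intro hw
    have h := M.consistent_of_derives hw
    simp only [flatMap_controlOf_map_inr, flatMap_lettersOf_map_inr] at h
    rcases h with ⟨h, -⟩ | ⟨i, h, -⟩ | ⟨-, h⟩
    exacts [by simp at h, by simp at h, h]
  · rintro ⟨w₀, hw₀, hreach⟩
    show M.simGrammar.Derives [M.ctrl none] _
    have hstart := M.mem_simRules_iff.mpr (.inl ⟨w₀, hw₀, rfl⟩)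
    have herase := M.mem_simRules_iff.mpr (.inr (.inr (.inr (.inl rfl))))
    have hrun : M.simGrammar.Derives (M.ctrl (some M.i0) :: M.codes w₀)
        (M.ctrl (some M.ifin) :: M.codes (w.map M.emb)) :=
      Relation.ReflTransGen.lift' (fun c : Fin M.k × List V => M.ctrl (some c.1) :: M.codes c.2)
        (fun _ _ h => M.derives_of_tr h) _ _ hreach
    exact .head (by simpa using M.simGrammar.step_of_mem hstart [] [])
      (hrun.trans (.head (by simpa using M.simGrammar.step_of_mem herase [] _)
        (M.derives_codes_emb w)))

end GCID

/-! ### A graph-controlled insertion-deletion system simulating a grammar -/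

namespace Grammar

variable {T : Type} (G : Grammar T)

def IsSentential (S : List (G.NT ⊕ T)) : Prop := G.Derives [.inl G.start] S

def lhs (i : Fin G.rules.length) : List (G.NT ⊕ T) := G.rules[i].1

def rhs (i : Fin G.rules.length) : List (G.NT ⊕ T) := G.rules[i].2

/-- Applying rule `i` takes one stage per letter of its left side (deleted right to left),
then one per letter of its right side (inserted right to left). -/
def stages (i : Fin G.rules.length) : ℕ := (G.lhs i).length + (G.rhs i).length

def stageBound : ℕ := (G.rules.map fun r => r.1.length + r.2.length).sum + 1

instance : NeZero G.stageBound := ⟨Nat.succ_ne_zero _⟩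

theorem lt_stageBound {i : Fin G.rules.length} {e : ℕ} (he : e < G.stages i) :
    e < G.stageBound :=
  he.trans_le <| Nat.le_succ_of_le <| List.le_sum_of_mem <|
    List.mem_map_of_mem (f := fun r => r.1.length + r.2.length) (List.getElem_mem i.isLt)

theorem lhs_length_le_stages (i : Fin G.rules.length) : (G.lhs i).length ≤ G.stages i :=
  Nat.le_add_right _ _

theorem stages_pos (i : Fin G.rules.length) : 0 < G.stages i := by
  obtain ⟨X, hX⟩ := G.lhs_nt _ (List.getElem_mem i.isLt)
  exact (List.length_pos_of_mem hX).trans_le (G.lhs_length_le_stages i)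

abbrev SimSym : Type := (G.NT ⊕ T) ⊕ (Fin G.rules.length × Fin G.stageBound)

def enc (w : List (G.NT ⊕ T)) : List G.SimSym := w.map .inl

@[simp] theorem enc_nil : G.enc [] = [] := rfl

@[simp] theorem enc_cons (a : G.NT ⊕ T) (w : List (G.NT ⊕ T)) :
    G.enc (a :: w) = .inl a :: G.enc w := rfl

@[simp] theorem enc_append (w w' : List (G.NT ⊕ T)) : G.enc (w ++ w') = G.enc w ++ G.enc w' :=
  List.map_append

/-- The marker of stage `e` of rule `i`; stages are taken modulo `G.stageBound`, which exceeds
every `G.stages i`. -/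
def marker (i : Fin G.rules.length) (e : ℕ) : G.SimSym := .inr (i, Fin.ofNat _ e)

theorem marker_eq_marker_iff {i i' : Fin G.rules.length} {e e' : ℕ} (he : e < G.stageBound)
    (he' : e' < G.stageBound) : G.marker i e = G.marker i' e' ↔ i = i' ∧ e = e' := by
  simp [marker, Fin.ext_iff, Nat.mod_eq_of_lt he, Nat.mod_eq_of_lt he']

/-! In the system simulating `G`, component `1` holds strings with no rule in progress;
in component `2` the current stage deletes or inserts its letter next to the marker; in
component `3` the next marker is inserted, or the marker erased after the last stage; in
component `0` the old marker is deleted in front of its successor. -/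

def enterRule (i : Fin G.rules.length) : Fin 4 × InsDelRule G.SimSym × Fin 4 :=
  (1, .ins [] [G.marker i 0] [], 2)

def deleteRule (i : Fin G.rules.length) (e : ℕ) (a : G.NT ⊕ T) :
    Fin 4 × InsDelRule G.SimSym × Fin 4 :=
  (2, .del [] [.inl a] [G.marker i e], 3)

def insertRule (i : Fin G.rules.length) (e : ℕ) (b : G.NT ⊕ T) :
    Fin 4 × InsDelRule G.SimSym × Fin 4 :=
  (2, .ins [G.marker i e] [.inl b] [], 3)

def markRule (i : Fin G.rules.length) (e : ℕ) : Fin 4 × InsDelRule G.SimSym × Fin 4 :=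
  (3, .ins [G.marker i e] [G.marker i (e + 1)] [], 0)

def unmarkRule (i : Fin G.rules.length) (e : ℕ) : Fin 4 × InsDelRule G.SimSym × Fin 4 :=
  (0, .del [] [G.marker i e] [G.marker i (e + 1)], 2)

def exitRule (i : Fin G.rules.length) : Fin 4 × InsDelRule G.SimSym × Fin 4 :=
  (3, .del [] [G.marker i (G.stages i - 1)] [], 1)

def insDelRules : List (Fin 4 × InsDelRule G.SimSym × Fin 4) :=
  (List.finRange G.rules.length).flatMap fun i =>
    [G.enterRule i, G.exitRule i] ++
    (G.lhs i).reverse.zipIdx.map (fun p => G.deleteRule i p.2 p.1) ++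
    (G.rhs i).reverse.zipIdx.map (fun p => G.insertRule i ((G.lhs i).length + p.2) p.1) ++
    (List.range (G.stages i - 1)).flatMap (fun e => [G.markRule i e, G.unmarkRule i e])

theorem mem_insDelRules_iff {r : Fin 4 × InsDelRule G.SimSym × Fin 4} :
    r ∈ G.insDelRules ↔ ∃ i, r = G.enterRule i ∨ r = G.exitRule i ∨
      (∃ e a, (G.lhs i).reverse[e]? = some a ∧ r = G.deleteRule i e a) ∨
      (∃ f b, (G.rhs i).reverse[f]? = some b ∧ r = G.insertRule i ((G.lhs i).length + f) b) ∨
      (∃ e, e + 1 < G.stages i ∧ (r = G.markRule i e ∨ r = G.unmarkRule i e)) := by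
  simp only [insDelRules, List.mem_flatMap, List.mem_finRange, true_and, List.mem_append,
    List.mem_cons, List.mem_map, List.mem_zipIdx_iff_getElem?, List.mem_range, Prod.exists,
    List.not_mem_nil, or_false]
  refine exists_congr fun i => ?_
  constructor
  · rintro ((((h | h) | ⟨a, e, ha, rfl⟩) | ⟨b, f, hb, rfl⟩) | ⟨e, he, h⟩)
    · exact .inl h
    · exact .inr (.inl h)
    · exact .inr (.inr (.inl ⟨e, a, ha, rfl⟩))
    · exact .inr (.inr (.inr (.inl ⟨f, b, hb, rfl⟩)))
    · exact .inr (.inr (.inr (.inr ⟨e, by omega, h⟩)))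
  · rintro (h | h | ⟨e, a, ha, rfl⟩ | ⟨f, b, hb, rfl⟩ | ⟨e, he, h⟩)
    · exact .inl (.inl (.inl (.inl h)))
    · exact .inl (.inl (.inl (.inr h)))
    · exact .inl (.inl (.inr ⟨a, e, ha, rfl⟩))
    · exact .inl (.inr ⟨b, f, hb, rfl⟩)
    · exact .inr ⟨e, by omega, h⟩

noncomputable def insDelSystem [Finite T] : GCID G.SimSym T where
  k := 4
  hV := have := G.hNT; inferInstance
  emb t := .inl (.inr t)
  embInj _ _ h := by simpa using h
  axioms := [G.enc [.inl G.start]]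
  i0 := 1
  ifin := 1
  R := G.insDelRules
  mid_ne r hr := by
    obtain ⟨i, rfl | rfl | ⟨e, a, -, rfl⟩ | ⟨f, b, -, rfl⟩ | ⟨e, -, rfl | rfl⟩⟩ :=
      G.mem_insDelRules_iff.mp hr <;>
    simp [InsDelRule.mid, enterRule, exitRule, deleteRule, insertRule, markRule, unmarkRule]

theorem insDelSystem_sizeLE [Finite T] : G.insDelSystem.SizeLE 1 1 0 1 0 1 := by
  intro r hr
  obtain ⟨i, rfl | rfl | ⟨e, a, -, rfl⟩ | ⟨f, b, -, rfl⟩ | ⟨e, -, rfl | rfl⟩⟩ :=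
    G.mem_insDelRules_iff.mp hr <;>
  simp [InsDelRule.SizeLE, enterRule, exitRule, deleteRule, insertRule, markRule, unmarkRule]

/-- The letters of the left side of rule `i` deleted during its first `e` stages. -/
def deleted (i : Fin G.rules.length) (e : ℕ) : List (G.NT ⊕ T) :=
  ((G.lhs i).reverse.take e).reverse

def remaining (i : Fin G.rules.length) (e : ℕ) : List (G.NT ⊕ T) :=
  ((G.lhs i).reverse.drop e).reverse

/-- The letters of the right side of rule `i` inserted during its first `e` stages
(none while `e ≤ (G.lhs i).length`, by truncated subtraction). -/
def inserted (i : Fin G.rules.length) (e : ℕ) : List (G.NT ⊕ T) :=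
  ((G.rhs i).reverse.take (e - (G.lhs i).length)).reverse

theorem deleted_succ {i : Fin G.rules.length} {e : ℕ} {a : G.NT ⊕ T}
    (ha : (G.lhs i).reverse[e]? = some a) : G.deleted i (e + 1) = a :: G.deleted i e :=
  List.reverse_take_add_one_of_getElem? ha

theorem deleted_of_le {i : Fin G.rules.length} {e : ℕ} (he : (G.lhs i).length ≤ e) :
    G.deleted i e = G.lhs i := by
  rw [deleted, List.take_of_length_le (by simpa using he), List.reverse_reverse]

theorem remaining_zero (i : Fin G.rules.length) : G.remaining i 0 = G.lhs i := by
  simp [remaining]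

theorem remaining_of_le {i : Fin G.rules.length} {e : ℕ} (he : (G.lhs i).length ≤ e) :
    G.remaining i e = [] := by
  rw [remaining, List.drop_of_length_le (by simpa using he), List.reverse_nil]

theorem inserted_succ_of_lt {i : Fin G.rules.length} {e : ℕ} (he : e < (G.lhs i).length) :
    G.inserted i (e + 1) = G.inserted i e := by
  simp [inserted, Nat.sub_eq_zero_of_le he, Nat.sub_eq_zero_of_le he.le]

theorem inserted_succ {i : Fin G.rules.length} {f : ℕ} {b : G.NT ⊕ T}
    (hb : (G.rhs i).reverse[f]? = some b) :
    G.inserted i ((G.lhs i).length + f + 1) = b :: G.inserted i ((G.lhs i).length + f) := by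
  simp only [inserted, Nat.add_assoc, Nat.add_sub_cancel_left]
  exact List.reverse_take_add_one_of_getElem? hb

theorem inserted_stages (i : Fin G.rules.length) : G.inserted i (G.stages i) = G.rhs i := by
  rw [inserted, stages, Nat.add_sub_cancel_left, List.take_of_length_le (by simp),
    List.reverse_reverse]

theorem enc_append_marker_cons_eq {L R : List (G.NT ⊕ T)} {i i' : Fin G.rules.length}
    {e e' : ℕ} {x y : List G.SimSym} (he : e < G.stageBound) (he' : e' < G.stageBound)
    (h : G.enc L ++ G.marker i e :: G.enc R = x ++ G.marker i' e' :: y) :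
    i' = i ∧ e' = e ∧ x = G.enc L ∧ y = G.enc R := by
  obtain ⟨hm, hx, hy⟩ := List.map_inl_append_inr_cons_map_inl_eq h
  obtain ⟨rfl, rfl⟩ := (G.marker_eq_marker_iff he' he).mp (congrArg Sum.inr hm)
  exact ⟨rfl, rfl, hx, hy⟩

theorem enc_append_marker_cons_marker_cons_eq {L R : List (G.NT ⊕ T)}
    {i i' : Fin G.rules.length} {e e' : ℕ} {x y : List G.SimSym} (he : e < G.stageBound)
    (he' : e' < G.stageBound)
    (h : G.enc L ++ G.marker i e :: G.marker i (e + 1) :: G.enc R =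
      x ++ G.marker i' e' :: G.marker i' (e' + 1) :: y) :
    i' = i ∧ e' = e ∧ x = G.enc L ∧ y = G.enc R := by
  obtain ⟨hm, -, hx, hy⟩ := List.map_inl_append_inr_cons_inr_cons_map_inl_eq h
  obtain ⟨rfl, rfl⟩ := (G.marker_eq_marker_iff he' he).mp (congrArg Sum.inr hm)
  exact ⟨rfl, rfl, hx, hy⟩

variable {G} in
theorem enc_eq_append {S : List (G.NT ⊕ T)} {x y : List G.SimSym} (h : G.enc S = x ++ y) :
    ∃ X Y, S = X ++ Y ∧ x = G.enc X ∧ y = G.enc Y := by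
  obtain ⟨X, Y, rfl, rfl, rfl⟩ := List.map_eq_append_iff.mp h
  exact ⟨X, Y, rfl, rfl, rfl⟩

variable {G} in
theorem enc_eq_append_singleton {L : List (G.NT ⊕ T)} {x : List G.SimSym} {a : G.NT ⊕ T}
    (h : G.enc L = x ++ [.inl a]) : ∃ L', L = L' ++ [a] ∧ x = G.enc L' := by
  obtain ⟨L', A, rfl, rfl, hA⟩ := enc_eq_append h
  obtain ⟨a', rfl, ha⟩ := List.map_eq_singleton_iff.mp hA.symm
  exact ⟨L', by rw [Sum.inl_injective ha], rfl⟩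

/-- Holds for every configuration reachable in `G.insDelSystem`. In the middle of applying rule `i`
between `L` and `Y`, the string is `L`, the marker, the letters inserted so far and `Y`,
while `L`, the letters deleted so far and `Y` form a sentential form. -/
inductive Invariant : Fin 4 × List G.SimSym → Prop
  | idle (S : List (G.NT ⊕ T)) : G.IsSentential S → Invariant (1, G.enc S)
  | act (i : Fin G.rules.length) (e : ℕ) (L Y : List (G.NT ⊕ T)) : e < G.stages i →
      G.IsSentential (L ++ G.deleted i e ++ Y) →
      Invariant (2, G.enc L ++ G.marker i e :: G.enc (G.inserted i e ++ Y))
  | acted (i : Fin G.rules.length) (e : ℕ) (L Y : List (G.NT ⊕ T)) : e < G.stages i →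
      G.IsSentential (L ++ G.deleted i (e + 1) ++ Y) →
      Invariant (3, G.enc L ++ G.marker i e :: G.enc (G.inserted i (e + 1) ++ Y))
  | swap (i : Fin G.rules.length) (e : ℕ) (L Y : List (G.NT ⊕ T)) : e + 1 < G.stages i →
      G.IsSentential (L ++ G.deleted i (e + 1) ++ Y) →
      Invariant (0, G.enc L ++ G.marker i e :: G.marker i (e + 1) ::
        G.enc (G.inserted i (e + 1) ++ Y))

variable {G}

theorem Invariant.enter {w w' : List G.SimSym} {i : Fin G.rules.length}
    (hI : G.Invariant (1, w)) (h : (G.enterRule i).2.1.Applies w w') : G.Invariant (2, w') := by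
  cases hI with
  | idle S hS =>
    obtain ⟨x, y, hw, rfl⟩ := h
    simp only [List.append_nil] at hw ⊢
    obtain ⟨X, Y, rfl, rfl, rfl⟩ := enc_eq_append hw
    simpa [inserted] using Invariant.act i 0 X Y (G.stages_pos i) (by simpa [deleted] using hS)

theorem Invariant.delete {w w' : List G.SimSym} {i : Fin G.rules.length} {e : ℕ}
    {a : G.NT ⊕ T} (hI : G.Invariant (2, w)) (ha : (G.lhs i).reverse[e]? = some a)
    (h : (G.deleteRule i e a).2.1.Applies w w') : G.Invariant (3, w') := by
  have hP : e < (G.lhs i).length := by simpa using (List.getElem?_eq_some_iff.mp ha).1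
  cases hI with
  | act i' e' L Y he' hS =>
    obtain ⟨x, y, hw, rfl⟩ := h
    replace hw : G.enc L ++ G.marker i' e' :: G.enc (G.inserted i' e' ++ Y) =
        (x ++ [.inl a]) ++ G.marker i e :: y := by simpa using hw
    obtain ⟨rfl, rfl, hx, rfl⟩ := G.enc_append_marker_cons_eq (G.lt_stageBound he')
      (G.lt_stageBound (hP.trans_le (G.lhs_length_le_stages i))) hw
    obtain ⟨L', rfl, rfl⟩ := enc_eq_append_singleton hx.symm
    have := Invariant.acted i e L' Y he' (by simpa [G.deleted_succ ha] using hS)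
    simpa [G.inserted_succ_of_lt hP] using this

theorem Invariant.insert {w w' : List G.SimSym} {i : Fin G.rules.length} {f : ℕ}
    {b : G.NT ⊕ T} (hI : G.Invariant (2, w)) (hb : (G.rhs i).reverse[f]? = some b)
    (h : (G.insertRule i ((G.lhs i).length + f) b).2.1.Applies w w') :
    G.Invariant (3, w') := by
  have hQ : (G.lhs i).length + f < G.stages i := by
    have := (List.getElem?_eq_some_iff.mp hb).1
    simp only [List.length_reverse] at this
    unfold stages; omega
  cases hI with
  | act i' e' L Y he' hS =>
    obtain ⟨x, y, hw, rfl⟩ := h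
    replace hw : G.enc L ++ G.marker i' e' :: G.enc (G.inserted i' e' ++ Y) =
        x ++ G.marker i ((G.lhs i).length + f) :: y := by simpa using hw
    obtain ⟨rfl, rfl, rfl, rfl⟩ := G.enc_append_marker_cons_eq (G.lt_stageBound he')
      (G.lt_stageBound hQ) hw
    have hdel : G.deleted i ((G.lhs i).length + f + 1) = G.deleted i ((G.lhs i).length + f) := by
      rw [G.deleted_of_le (by omega), G.deleted_of_le (by omega)]
    simpa [G.inserted_succ hb] using Invariant.acted i _ L Y he' (hdel ▸ hS)

theorem Invariant.mark {w w' : List G.SimSym} {i : Fin G.rules.length} {e : ℕ}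
    (hI : G.Invariant (3, w)) (he : e + 1 < G.stages i)
    (h : (G.markRule i e).2.1.Applies w w') : G.Invariant (0, w') := by
  cases hI with
  | acted i' e' L Y he' hS =>
    obtain ⟨x, y, hw, rfl⟩ := h
    replace hw : G.enc L ++ G.marker i' e' :: G.enc (G.inserted i' (e' + 1) ++ Y) =
        x ++ G.marker i e :: y := by simpa using hw
    obtain ⟨rfl, rfl, rfl, rfl⟩ := G.enc_append_marker_cons_eq (G.lt_stageBound he')
      (G.lt_stageBound (Nat.lt_of_succ_lt he)) hw
    simpa using Invariant.swap i e L Y he hS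

theorem Invariant.unmark {w w' : List G.SimSym} {i : Fin G.rules.length} {e : ℕ}
    (hI : G.Invariant (0, w)) (he : e + 1 < G.stages i)
    (h : (G.unmarkRule i e).2.1.Applies w w') : G.Invariant (2, w') := by
  cases hI with
  | swap i' e' L Y he' hS =>
    obtain ⟨x, y, hw, rfl⟩ := h
    replace hw : G.enc L ++ G.marker i' e' :: G.marker i' (e' + 1) ::
        G.enc (G.inserted i' (e' + 1) ++ Y) = x ++ G.marker i e :: G.marker i (e + 1) :: y := by
      simpa using hw
    obtain ⟨rfl, rfl, rfl, rfl⟩ := G.enc_append_marker_cons_marker_cons_eq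
      (G.lt_stageBound (Nat.lt_of_succ_lt he')) (G.lt_stageBound (Nat.lt_of_succ_lt he)) hw
    simpa using Invariant.act i (e + 1) L Y he hS

theorem Invariant.exit {w w' : List G.SimSym} {i : Fin G.rules.length}
    (hI : G.Invariant (3, w)) (h : (G.exitRule i).2.1.Applies w w') : G.Invariant (1, w') := by
  have hN := G.stages_pos i
  cases hI with
  | acted i' e' L Y he' hS =>
    obtain ⟨x, y, hw, rfl⟩ := h
    replace hw : G.enc L ++ G.marker i' e' :: G.enc (G.inserted i' (e' + 1) ++ Y) =
        x ++ G.marker i (G.stages i - 1) :: y := by simpa using hw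
    obtain ⟨rfl, rfl, rfl, rfl⟩ := G.enc_append_marker_cons_eq (G.lt_stageBound he')
      (G.lt_stageBound (Nat.sub_lt hN Nat.one_pos)) hw
    rw [Nat.sub_add_cancel hN, G.inserted_stages] at *
    rw [G.deleted_of_le (G.lhs_length_le_stages i)] at hS
    have := Invariant.idle (L ++ G.rhs i ++ Y)
      (hS.tail (G.step_of_mem (List.getElem_mem i.isLt) L Y))
    simpa [enc] using this

theorem Invariant.exists_isSentential {w : List G.SimSym} (hI : G.Invariant (1, w)) :
    ∃ S, w = G.enc S ∧ G.IsSentential S := by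
  cases hI with
  | idle S hS => exact ⟨S, rfl, hS⟩

variable [Finite T]

theorem Invariant.of_tr {c c' : Fin 4 × List G.SimSym} (hI : G.Invariant c)
    (h : G.insDelSystem.Tr c c') : G.Invariant c' := by
  obtain ⟨_, w⟩ := c
  obtain ⟨_, w'⟩ := c'
  obtain ⟨r, hr, rfl, rfl, hap⟩ := h
  obtain ⟨i, rfl | rfl | ⟨e, a, ha, rfl⟩ | ⟨f, b, hb, rfl⟩ | ⟨e, he, rfl | rfl⟩⟩ :=
    G.mem_insDelRules_iff.mp hr
  · exact hI.enter hap
  · exact hI.exit hap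
  · exact hI.delete ha hap
  · exact hI.insert hb hap
  · exact hI.mark he hap
  · exact hI.unmark he hap

theorem Invariant.of_reflTransGen {c c' : Fin 4 × List G.SimSym} (hI : G.Invariant c)
    (h : Relation.ReflTransGen G.insDelSystem.Tr c c') : G.Invariant c' := by
  induction h with
  | refl => exact hI
  | tail _ h ih => exact ih.of_tr h

variable (G)

theorem insDelSystem_lang_subset : G.insDelSystem.lang ⊆ G.language := by
  rintro w ⟨w₀, hw₀, hrun⟩
  obtain rfl := List.mem_singleton.mp hw₀
  obtain ⟨S, hS, hSent⟩ := ((Invariant.idle _ .refl).of_reflTransGen hrun).exists_isSentential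
  obtain rfl : S = w.map .inr :=
    List.map_injective_iff.mpr Sum.inl_injective (by rw [List.map_map]; exact hS.symm)
  exact hSent

theorem tr_enter (i : Fin G.rules.length) (L R : List (G.NT ⊕ T)) :
    G.insDelSystem.Tr ((1 : Fin 4), G.enc (L ++ R))
      ((2 : Fin 4), G.enc L ++ G.marker i 0 :: G.enc R) :=
  ⟨_, G.mem_insDelRules_iff.mpr ⟨i, .inl rfl⟩, rfl, rfl, G.enc L, G.enc R, by simp, by simp⟩

theorem tr_act {i : Fin G.rules.length} {e : ℕ} (he : e < G.stages i) (X Y : List (G.NT ⊕ T)) :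
    G.insDelSystem.Tr
      ((2 : Fin 4), G.enc (X ++ G.remaining i e) ++ G.marker i e :: G.enc (G.inserted i e ++ Y))
      ((3 : Fin 4), G.enc (X ++ G.remaining i (e + 1)) ++ G.marker i e ::
        G.enc (G.inserted i (e + 1) ++ Y)) := by
  by_cases hP : e < (G.lhs i).length
  · have ha := List.getElem?_eq_getElem (l := (G.lhs i).reverse) (i := e) (by simpa using hP)
    refine ⟨_, G.mem_insDelRules_iff.mpr ⟨i, .inr (.inr (.inl ⟨e, _, ha, rfl⟩))⟩, rfl, rfl,
      G.enc (X ++ G.remaining i (e + 1)), G.enc (G.inserted i e ++ Y), ?_, ?_⟩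
    · simp [remaining, List.reverse_drop_of_getElem? ha]
    · simp [G.inserted_succ_of_lt hP]
  · obtain ⟨f, rfl⟩ := Nat.exists_eq_add_of_le (not_lt.mp hP)
    have hb := List.getElem?_eq_getElem (l := (G.rhs i).reverse) (i := f)
      (by simp only [stages] at he; simp; omega)
    refine ⟨_, G.mem_insDelRules_iff.mpr ⟨i, .inr (.inr (.inr (.inl ⟨f, _, hb, rfl⟩)))⟩, rfl, rfl,
      G.enc X, G.enc (G.inserted i ((G.lhs i).length + f) ++ Y), ?_, ?_⟩
    · simp [G.remaining_of_le (Nat.le_add_right _ f)]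
    · rw [G.inserted_succ hb, G.remaining_of_le (by omega)]
      simp

theorem tr_mark {i : Fin G.rules.length} {e : ℕ} (he : e + 1 < G.stages i)
    (L R : List (G.NT ⊕ T)) :
    G.insDelSystem.Tr ((3 : Fin 4), G.enc L ++ G.marker i e :: G.enc R)
      ((0 : Fin 4), G.enc L ++ G.marker i e :: G.marker i (e + 1) :: G.enc R) :=
  ⟨_, G.mem_insDelRules_iff.mpr ⟨i, .inr (.inr (.inr (.inr ⟨e, he, .inl rfl⟩)))⟩, rfl, rfl,
    G.enc L, G.enc R, by simp, by simp⟩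

theorem tr_unmark {i : Fin G.rules.length} {e : ℕ} (he : e + 1 < G.stages i)
    (L R : List (G.NT ⊕ T)) :
    G.insDelSystem.Tr ((0 : Fin 4), G.enc L ++ G.marker i e :: G.marker i (e + 1) :: G.enc R)
      ((2 : Fin 4), G.enc L ++ G.marker i (e + 1) :: G.enc R) :=
  ⟨_, G.mem_insDelRules_iff.mpr ⟨i, .inr (.inr (.inr (.inr ⟨e, he, .inr rfl⟩)))⟩, rfl, rfl,
    G.enc L, G.enc R, by simp, by simp⟩

theorem tr_exit (i : Fin G.rules.length) (L R : List (G.NT ⊕ T)) :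
    G.insDelSystem.Tr ((3 : Fin 4), G.enc L ++ G.marker i (G.stages i - 1) :: G.enc R)
      ((1 : Fin 4), G.enc (L ++ R)) :=
  ⟨_, G.mem_insDelRules_iff.mpr ⟨i, .inr (.inl rfl)⟩, rfl, rfl,
    G.enc L, G.enc R, by simp, by simp⟩

theorem reflTransGen_act {i : Fin G.rules.length} {e : ℕ} (he : e < G.stages i)
    (X Y : List (G.NT ⊕ T)) :
    Relation.ReflTransGen G.insDelSystem.Tr
      ((2 : Fin 4), G.enc (X ++ G.lhs i) ++ G.marker i 0 :: G.enc Y)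
      ((2 : Fin 4), G.enc (X ++ G.remaining i e) ++ G.marker i e ::
        G.enc (G.inserted i e ++ Y)) := by
  induction e with
  | zero => simpa [remaining_zero, inserted] using .refl
  | succ e ih =>
    exact (((ih (by omega)).tail (G.tr_act (by omega) X Y)).tail (G.tr_mark he _ _)).tail
      (G.tr_unmark he _ _)

theorem reflTransGen_of_step {S S' : List (G.NT ⊕ T)} (h : G.Step S S') :
    Relation.ReflTransGen G.insDelSystem.Tr ((1 : Fin 4), G.enc S) ((1 : Fin 4), G.enc S') := by
  obtain ⟨r, hr, X, Y, rfl, rfl⟩ := h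
  obtain ⟨n, hn, rfl⟩ := List.mem_iff_getElem.mp hr
  set i : Fin G.rules.length := ⟨n, hn⟩
  have hN := G.stages_pos i
  have hlast := G.tr_act (Nat.sub_lt hN Nat.one_pos) X Y
  rw [Nat.sub_add_cancel hN, G.remaining_of_le (G.lhs_length_le_stages i), G.inserted_stages,
    List.append_nil] at hlast
  have hexit := G.tr_exit i X (G.rhs i ++ Y)
  rw [← List.append_assoc] at hexit
  exact .head (G.tr_enter i (X ++ G.lhs i) Y)
    (((G.reflTransGen_act (Nat.sub_lt hN Nat.one_pos) X Y).tail hlast).tail hexit)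

theorem insDelSystem_lang : G.insDelSystem.lang = G.language := by
  refine G.insDelSystem_lang_subset.antisymm fun w hw =>
    ⟨G.enc [.inl G.start], List.mem_singleton_self _, ?_⟩
  have hemb : G.enc (w.map .inr) = w.map G.insDelSystem.emb := by
    rw [enc, List.map_map]
    rfl
  rw [← hemb]
  exact Relation.ReflTransGen.lift' (fun S => ((1 : Fin 4), G.enc S))
    (fun _ _ h => G.reflTransGen_of_step h) _ _ hw

end Grammar

/-- **Theorem 3.**  `GCL₄(ins₁^{1,0}, del₁^{0,1}) = RE`:  the family of
languages generated by graph-controlled insertion-deletion systems with at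
most 4 components, with insertion rules of size at most `(1,1,0)` and
deletion rules of size at most `(1,0,1)`, equals the family of recursively
enumerable languages. -/
theorem GCL4_ins110_del101_eq_RE (T : Type) [Finite T] :
    GCL T 4 1 1 0 1 0 1 = RE T := by
  ext L
  constructor
  · rintro ⟨V, M, -, -, rfl⟩
    exact ⟨M.simGrammar, M.simGrammar_language⟩
  · rintro ⟨G, rfl⟩
    exact ⟨G.SimSym, G.insDelSystem, le_rfl, G.insDelSystem_sizeLE, G.insDelSystem_lang⟩
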